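/- arXiv:1403.1960 — 2 statements merged into one kernel-verified Lean document; each statement's English description precedes it below -/
import Mathlib

section
/- Let λ₁, λ₂ ∈ ℂ with |λ₁| ≤ 1, |λ₂| ≤ 1 and a ∈ ℂ with |a| ≤ ½|1 - conj(λ₂)λ₁| + ½(1-|λ₁|²)^{1/2}(1-|λ₂|²)^{1/2}. Then (a, λ₁+λ₂, λ₁λ₂) lies in the closure of the pentablock 𝒫. -/
/-- The operator norm of a 2×2 complex matrix acting on Euclidean ℂ². -/
noncomputable def opNorm (A : Matrix (Fin 2) (Fin 2) ℂ) : ℝ :=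
  ‖Matrix.toEuclideanCLM (𝕜 := ℂ) A‖

/-- The pentablock: the image of the open unit operator-norm ball of 2×2 complex
matrices under `A ↦ (A₂₁, tr A, det A)`. -/
def pentablock : Set (ℂ × ℂ × ℂ) :=
  {x | ∃ A : Matrix (Fin 2) (Fin 2) ℂ, opNorm A < 1 ∧ x = (A 1 0, A.trace, A.det)}

/-!
Conjugating `T = !![λ₁, t; 0, λ₂]` by the unitary `U = !![c, -s; v s, v c]` (`c = cos θ`,
`s = sin θ`, `|v| = 1`) keeps trace, determinant and operator norm, and puts
`v (c s (λ₁ - λ₂) - s² t)` into the `(1, 0)` entry. `T` is a contraction when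
`|t|² ≤ (1 - |λ₁|²)(1 - |λ₂|²)`, and choosing `t = -τ ω`, with `τ` the square root of that bound
and `ω` the phase of `λ₁ - λ₂`, makes the entry `v ω (c s |λ₁ - λ₂| + s² τ)`. By the identity
`|1 - λ̄₂ λ₁|² = |λ₁ - λ₂|² + τ²` the modulus ranges over `[0, (|1 - λ̄₂ λ₁| + τ) / 2]` as `θ`
varies, and `v` adjusts the phase. Such a contraction lies in the closed unit ball, which is the
closure of the open one.
-/

open Matrix Real
open scoped Matrix.Norms.L2Operator

lemma two_mul_mul_le_of_sq_le {p r k X Y : ℝ} (hp : 0 ≤ p) (hr : 0 ≤ r) (hk : k ^ 2 ≤ p * r) :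
    2 * k * X * Y ≤ p * X ^ 2 + r * Y ^ 2 := by
  rcases hp.eq_or_lt with rfl | hp
  · have : k = 0 := by nlinarith
    subst this; nlinarith
  · refine le_of_mul_le_mul_left ?_ hp
    nlinarith [sq_nonneg (p * X - k * Y), mul_nonneg (sub_nonneg.2 hk) (sq_nonneg Y)]

lemma norm_le_one_of_forall_sq_norm_le {A : Matrix (Fin 2) (Fin 2) ℂ}
    (h : ∀ x y : ℂ, ‖A 0 0 * x + A 0 1 * y‖ ^ 2 + ‖A 1 0 * x + A 1 1 * y‖ ^ 2 ≤ ‖x‖ ^ 2 + ‖y‖ ^ 2) :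
    ‖A‖ ≤ 1 := by
  refine ContinuousLinearMap.opNorm_le_bound _ zero_le_one fun x => ?_
  rw [one_mul, ← sq_le_sq₀ (norm_nonneg _) (norm_nonneg _), EuclideanSpace.norm_sq_eq,
    EuclideanSpace.norm_sq_eq]
  simpa [Fin.sum_univ_two, Matrix.mulVec, dotProduct] using h (x 0) (x 1)

lemma norm_upperTriangular_le_one {l₁ l₂ t : ℂ} (h1 : ‖l₁‖ ≤ 1) (h2 : ‖l₂‖ ≤ 1)
    (ht : ‖t‖ ^ 2 ≤ (1 - ‖l₁‖ ^ 2) * (1 - ‖l₂‖ ^ 2)) : ‖!![l₁, t; 0, l₂]‖ ≤ 1 := by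
  refine norm_le_one_of_forall_sq_norm_le fun x y => ?_
  simp only [of_apply, cons_val', cons_val_zero, cons_val_one, empty_val', cons_val_fin_one,
    zero_mul, zero_add, norm_mul]
  have htri : ‖l₁ * x + t * y‖ ≤ ‖l₁‖ * ‖x‖ + ‖t‖ * ‖y‖ := by
    simpa only [norm_mul] using norm_add_le (l₁ * x) (t * y)
  have hp : 0 ≤ 1 - ‖l₁‖ ^ 2 := sub_nonneg.2 (pow_le_one₀ (norm_nonneg _) h1)
  have hq : 0 ≤ 1 - ‖l₂‖ ^ 2 := sub_nonneg.2 (pow_le_one₀ (norm_nonneg _) h2)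
  have hr : 0 ≤ 1 - ‖l₂‖ ^ 2 - ‖t‖ ^ 2 := by nlinarith [mul_nonneg (sq_nonneg ‖l₁‖) hq]
  have hcross := two_mul_mul_le_of_sq_le (k := ‖l₁‖ * ‖t‖) (X := ‖x‖) (Y := ‖y‖) hp hr
    (by nlinarith)
  nlinarith [pow_le_pow_left₀ (norm_nonneg _) htri 2]

lemma mem_closure_pentablock_of_norm_le_one {A : Matrix (Fin 2) (Fin 2) ℂ} (hA : ‖A‖ ≤ 1) :
    (A 1 0, A.trace, A.det) ∈ closure pentablock := by
  have hball : A ∈ closure (Metric.ball 0 1) := by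
    rwa [closure_ball 0 one_ne_zero, mem_closedBall_zero_iff]
  refine map_mem_closure (f := fun B : Matrix (Fin 2) (Fin 2) ℂ => (B 1 0, B.trace, B.det))
    (by fun_prop) hball fun B hB => ⟨B, ?_, rfl⟩
  simpa [opNorm, ← Matrix.cstar_norm_def] using hB

lemma mem_closure_pentablock_of_unitary_conj {U T : Matrix (Fin 2) (Fin 2) ℂ}
    (hU : U ∈ unitary (Matrix (Fin 2) (Fin 2) ℂ)) (hT : ‖T‖ ≤ 1) :
    ((U * T * star U) 1 0, T.trace, T.det) ∈ closure pentablock := by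
  have hUU : star U * U = 1 := Unitary.star_mul_self_of_mem hU
  have hnorm : ‖U * T * star U‖ = ‖T‖ := by
    rw [CStarRing.norm_mul_mem_unitary _ (Unitary.star_mem hU), CStarRing.norm_mem_unitary_mul _ hU]
  have htrace : (U * T * star U).trace = T.trace := by
    rw [trace_mul_cycle, hUU, Matrix.one_mul]
  have hdet : (U * T * star U).det = T.det := by
    rw [det_mul, mul_comm, det_mul, ← mul_assoc, ← det_mul, hUU, det_one, one_mul]
  simpa [htrace, hdet] using mem_closure_pentablock_of_norm_le_one (hnorm.trans_le hT)

lemma rotation_mem_unitary {c s : ℝ} {v : ℂ} (hcs : c ^ 2 + s ^ 2 = 1) (hv : ‖v‖ = 1) :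
    !![(c : ℂ), -s; v * s, v * c] ∈ unitary (Matrix (Fin 2) (Fin 2) ℂ) := by
  have hvv : v * (starRingEnd ℂ) v = 1 := by
    rw [Complex.mul_conj, Complex.normSq_eq_norm_sq, hv]; simp
  have hcsC : (c : ℂ) ^ 2 + (s : ℂ) ^ 2 = 1 := by exact_mod_cast hcs
  refine Matrix.mem_unitaryGroup_iff.2 ?_
  ext i j
  fin_cases i <;> fin_cases j <;>
    simp only [Fin.isValue, Fin.zero_eta, Fin.mk_one, Matrix.mul_apply, Fin.sum_univ_two, of_apply,
      cons_val', cons_val_fin_one, cons_val_zero, cons_val_one, star_apply, RCLike.star_def,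
      map_mul, map_neg, Complex.conj_ofReal, mul_neg, neg_mul, neg_neg, one_apply_eq, one_apply_ne, ne_eq,
      zero_ne_one, one_ne_zero, not_false_eq_true]
  · linear_combination hcsC
  · ring
  · ring
  · linear_combination hvv + (v * (starRingEnd ℂ) v) * hcsC

lemma exists_cos_mul_sin_mul_add_sin_sq_mul_eq {d τ x : ℝ} (hx₀ : 0 ≤ x)
    (hx : 2 * x ≤ √(d ^ 2 + τ ^ 2) + τ) :
    ∃ θ : ℝ, cos θ * sin θ * d + sin θ ^ 2 * τ = x := by
  -- The expression is `(d sin 2θ + τ (1 - cos 2θ)) / 2`, maximal at `2θ = arg (-τ + d i)`.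
  set z : ℂ := ⟨-τ, d⟩
  have hz : ‖z‖ = √(d ^ 2 + τ ^ 2) := by
    rw [Complex.norm_def, Complex.normSq_mk]; ring_nf
  have harg : d * sin (Complex.arg z) - τ * cos (Complex.arg z) = √(d ^ 2 + τ ^ 2) := by
    rcases eq_or_ne z 0 with h | h
    · obtain ⟨hτ, hd⟩ := Complex.ext_iff.1 h
      have hτ : τ = 0 := neg_eq_zero.1 hτ
      subst hτ hd
      simp
    · rw [Complex.sin_arg, Complex.cos_arg h, ← hz]
      field_simp
      change d * d - τ * -τ = _
      rw [Complex.sq_norm, Complex.normSq_mk]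
      ring
  have hmax : 2 * (cos (Complex.arg z / 2) * sin (Complex.arg z / 2) * d
      + sin (Complex.arg z / 2) ^ 2 * τ) = √(d ^ 2 + τ ^ 2) + τ := by
    have hsin : sin (Complex.arg z) = 2 * sin (Complex.arg z / 2) * cos (Complex.arg z / 2) := by
      rw [← sin_two_mul, mul_div_cancel₀ _ two_ne_zero]
    rw [← harg, sin_sq_eq_half_sub, mul_div_cancel₀ _ two_ne_zero, hsin]
    ring
  obtain ⟨θ, -, hθ⟩ := intermediate_value_uIcc (a := 0) (b := Complex.arg z / 2)
    (f := fun θ => cos θ * sin θ * d + sin θ ^ 2 * τ) (by fun_prop)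
    (Set.mem_uIcc_of_le (by simpa using hx₀) (by linarith))
  exact ⟨θ, hθ⟩

lemma rotation_mul_upperTriangular_mul_star_apply_one_zero (c s : ℝ) (v l₁ l₂ t : ℂ) :
    (!![(c : ℂ), -s; v * s, v * c] * !![l₁, t; 0, l₂] * star !![(c : ℂ), -s; v * s, v * c]) 1 0
      = v * (c * s * (l₁ - l₂) - s ^ 2 * t) := by
  simp only [Fin.isValue, Matrix.mul_apply, Fin.sum_univ_two, of_apply, cons_val', cons_val_fin_one,
    cons_val_zero, cons_val_one, star_apply, RCLike.star_def, map_neg, Complex.conj_ofReal]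
  ring

lemma norm_one_sub_conj_mul_sq (l₁ l₂ : ℂ) :
    ‖1 - (starRingEnd ℂ) l₂ * l₁‖ ^ 2 = ‖l₁ - l₂‖ ^ 2 + (1 - ‖l₁‖ ^ 2) * (1 - ‖l₂‖ ^ 2) := by
  simp only [Complex.sq_norm, Complex.normSq_apply, Complex.sub_re, Complex.sub_im, Complex.mul_re,
    Complex.mul_im, Complex.one_re, Complex.one_im, Complex.conj_re, Complex.conj_im]
  ring

theorem stmt_7 (l₁ l₂ a : ℂ) (h1 : ‖l₁‖ ≤ 1) (h2 : ‖l₂‖ ≤ 1)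
    (ha : ‖a‖ ≤ ‖1 - (starRingEnd ℂ) l₂ * l₁‖ / 2
        + Real.sqrt (1 - ‖l₁‖ ^ 2) * Real.sqrt (1 - ‖l₂‖ ^ 2) / 2) :
    (a, l₁ + l₂, l₁ * l₂) ∈ closure pentablock := by
  set τ := √(1 - ‖l₁‖ ^ 2) * √(1 - ‖l₂‖ ^ 2)
  have hτ : τ ^ 2 = (1 - ‖l₁‖ ^ 2) * (1 - ‖l₂‖ ^ 2) := by
    rw [mul_pow, sq_sqrt (by nlinarith [norm_nonneg l₁]), sq_sqrt (by nlinarith [norm_nonneg l₂])]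
  have hR : ‖1 - (starRingEnd ℂ) l₂ * l₁‖ = √(‖l₁ - l₂‖ ^ 2 + τ ^ 2) := by
    rw [hτ, ← norm_one_sub_conj_mul_sq, sqrt_sq (norm_nonneg _)]
  obtain ⟨θ, hθ⟩ := exists_cos_mul_sin_mul_add_sin_sq_mul_eq (d := ‖l₁ - l₂‖) (τ := τ)
    (norm_nonneg a) (by linarith)
  set ω := Complex.exp (Complex.arg (l₁ - l₂) * Complex.I)
  set v := Complex.exp ((Complex.arg a - Complex.arg (l₁ - l₂) : ℝ) * Complex.I)
  have hU := rotation_mem_unitary (v := v) (cos_sq_add_sin_sq θ) (Complex.norm_exp_ofReal_mul_I _)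
  have hT := norm_upperTriangular_le_one (t := -τ * ω) h1 h2 (by
    rw [norm_mul, norm_neg, Complex.norm_real, Complex.norm_exp_ofReal_mul_I, mul_one, norm_eq_abs,
      sq_abs, hτ])
  have hentry : v * (cos θ * sin θ * (l₁ - l₂) - sin θ ^ 2 * (-τ * ω)) = a := by
    have hD : l₁ - l₂ = ‖l₁ - l₂‖ * ω := (Complex.norm_mul_exp_arg_mul_I _).symm
    have hvω : v * ω = Complex.exp (Complex.arg a * Complex.I) := by
      rw [← Complex.exp_add]; push_cast; ring_nf
    calc _ = v * (((cos θ * sin θ * ‖l₁ - l₂‖ + sin θ ^ 2 * τ : ℝ) : ℂ) * ω) := by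
          simp only [Complex.ofReal_add, Complex.ofReal_mul, Complex.ofReal_pow]
          linear_combination (v * cos θ * sin θ) * hD
      _ = ‖a‖ * Complex.exp (Complex.arg a * Complex.I) := by rw [hθ, ← hvω]; ring
      _ = a := Complex.norm_mul_exp_arg_mul_I a
  have key := mem_closure_pentablock_of_unitary_conj hU hT
  rw [rotation_mul_upperTriangular_mul_star_apply_one_zero, hentry] at key
  simpa [Matrix.trace_fin_two, Matrix.det_fin_two] using key
end

section
/- For each ω ∈ ℂ with |ω| = 1, η ∈ ℂ with |η| = 1, and α ∈ 𝔻, the map sending (a, λ₁+λ₂, λ₁λ₂) to ( ωη(1-|α|²)a / (1 - conj(α)(λ₁+λ₂) + conj(α)²λ₁λ₂), υ(λ₁)+υ(λ₂), υ(λ₁)υ(λ₂) ), where υ(λ) = η(λ-α)/(1-conj(α)λ), maps the pentablock 𝒫 into 𝒫. -/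
/-! A matrix `A` with `‖A‖ < 1` realising `(a, λ₁ + λ₂, λ₁λ₂)` is sent to
`U_ω (η (A - α)(1 - ᾱA)⁻¹) U_ω*` with `U_ω = diag(1, ω)`. The Möbius part is again a strict
contraction because `‖y - ᾱTy‖² = ‖Ty - αy‖² + (1 - |α|²)(‖y‖² - ‖Ty‖²)`, and conjugating by a
unitary preserves the norm. The coordinates of the image are read off the adjugate formula for
the 2×2 inverse, using `det (1 - ᾱA) = (1 - ᾱλ₁)(1 - ᾱλ₂)`. -/

open ComplexConjugate
open scoped Matrix.Norms.L2Operator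

section InnerProductSpace

variable {𝕜 E : Type*} [RCLike 𝕜] [NormedAddCommGroup E] [InnerProductSpace 𝕜 E]

theorem norm_sub_conj_smul_sq (α : 𝕜) (u v : E) :
    ‖u - conj α • v‖ ^ 2 = ‖v - α • u‖ ^ 2 + (1 - ‖α‖ ^ 2) * (‖u‖ ^ 2 - ‖v‖ ^ 2) := by
  rw [@norm_sub_sq 𝕜, @norm_sub_sq 𝕜, inner_smul_right, inner_smul_right, norm_smul, norm_smul,
    RCLike.norm_conj, ← inner_conj_symm v u,
    ← RCLike.conj_re (α * _), map_mul (starRingEnd 𝕜), RCLike.conj_conj]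
  ring

theorem ContinuousLinearMap.norm_sub_smul_one_mul_lt_one {T R : E →L[𝕜] E} {α : 𝕜}
    (hT : ‖T‖ < 1) (hα : ‖α‖ < 1) (hR : (1 - conj α • T) * R = 1) :
    ‖(T - α • 1) * R‖ < 1 := by
  set ε := (1 - ‖α‖ ^ 2) * (1 - ‖T‖ ^ 2)
  have hα' : 0 ≤ 1 - ‖α‖ ^ 2 := by nlinarith [norm_nonneg α]
  have hε : 0 < ε := mul_pos (by nlinarith [norm_nonneg α]) (by nlinarith [norm_nonneg T])
  have hε₁ : ε ≤ 1 := by nlinarith [sq_nonneg ‖T‖, sq_nonneg ‖α‖]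
  have hbound : ∀ x, ‖((T - α • 1) * R) x‖ ^ 2 ≤ (1 - ε / 4) * ‖x‖ ^ 2 := by
    intro x
    set y := R x
    have hx : x = y - conj α • T y := by simpa using (congrArg (· x) hR).symm
    have hTy : ‖T y‖ ≤ ‖T‖ * ‖y‖ := T.le_opNorm y
    have hxy : ‖x‖ ≤ 2 * ‖y‖ :=
      calc ‖x‖ ≤ ‖y‖ + ‖conj α • T y‖ := hx ▸ norm_sub_le _ _
        _ = ‖y‖ + ‖α‖ * ‖T y‖ := by rw [norm_smul, RCLike.norm_conj]
        _ ≤ 2 * ‖y‖ := by nlinarith [norm_nonneg α, norm_nonneg (T y), norm_nonneg y]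
    have hgap : ε * ‖y‖ ^ 2 ≤ (1 - ‖α‖ ^ 2) * (‖y‖ ^ 2 - ‖T y‖ ^ 2) := by
      have : ‖T y‖ ^ 2 ≤ ‖T‖ ^ 2 * ‖y‖ ^ 2 := by
        rw [← mul_pow]; exact pow_le_pow_left₀ (norm_nonneg _) hTy 2
      nlinarith
    have hid := norm_sub_conj_smul_sq α y (T y)
    rw [← hx] at hid
    have happ : ((T - α • 1) * R) x = T y - α • y := by simp [y]
    rw [happ]
    nlinarith [pow_le_pow_left₀ (norm_nonneg x) hxy 2]
  have hk : Real.sqrt (1 - ε / 4) < 1 := by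
    rw [Real.sqrt_lt' one_pos]; linarith
  refine lt_of_le_of_lt (ContinuousLinearMap.opNorm_le_bound _ (Real.sqrt_nonneg _) fun x => ?_) hk
  rw [← Real.sqrt_sq (norm_nonneg (((T - α • 1) * R) x)), ← Real.sqrt_sq (norm_nonneg x),
    ← Real.sqrt_mul (by linarith)]
  exact Real.sqrt_le_sqrt (hbound x)

end InnerProductSpace

namespace Matrix

section Field

variable {K : Type*} [Field K]

theorem det_fin_two_one_sub_smul (A : Matrix (Fin 2) (Fin 2) K) (c : K) :
    (1 - c • A).det = 1 - c * A.trace + c ^ 2 * A.det := by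
  simp [det_fin_two, trace_fin_two]; ring

theorem det_fin_two_sub_smul_one (A : Matrix (Fin 2) (Fin 2) K) (α : K) :
    (A - α • 1).det = A.det - α * A.trace + α ^ 2 := by
  simp [det_fin_two, trace_fin_two]; ring

/- These formulas need no invertibility: for singular `1 - c • A` both sides are `0`. -/

theorem mobius_fin_two_apply_one_zero (A : Matrix (Fin 2) (Fin 2) K) (α c : K) :
    ((A - α • 1) * (1 - c • A)⁻¹) 1 0 = (1 - α * c) * A 1 0 / (1 - c • A).det := by
  rw [inv_def, Ring.inverse_eq_inv', adjugate_fin_two]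
  simp [mul_apply, Fin.sum_univ_two]; ring

theorem trace_mobius_fin_two (A : Matrix (Fin 2) (Fin 2) K) (α c : K) :
    ((A - α • 1) * (1 - c • A)⁻¹).trace
      = ((1 + α * c) * A.trace - 2 * α - 2 * c * A.det) / (1 - c • A).det := by
  rw [inv_def, Ring.inverse_eq_inv', adjugate_fin_two, det_fin_two_one_sub_smul]
  simp [mul_apply, Fin.sum_univ_two, trace_fin_two, det_fin_two]; ring

end Field

variable {n : Type*} [Fintype n] [DecidableEq n]

theorem isUnit_one_sub_smul {A : Matrix n n ℂ} (hA : ‖A‖ < 1) {c : ℂ} (hc : ‖c‖ ≤ 1) :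
    IsUnit (1 - c • A) := by
  refine isUnit_one_sub_of_norm_lt_one ?_
  rw [norm_smul]
  exact mul_lt_one_of_nonneg_of_lt_one_right hc (norm_nonneg _) hA

theorem norm_mobius_lt_one {A : Matrix n n ℂ} (hA : ‖A‖ < 1) {α : ℂ} (hα : ‖α‖ < 1) :
    ‖(A - α • 1) * (1 - conj α • A)⁻¹‖ < 1 := by
  have hN := isUnit_one_sub_smul hA (c := conj α) (by rw [RCLike.norm_conj]; exact hα.le)
  rw [cstar_norm_def, map_mul, map_sub, map_smul, map_one]
  refine ContinuousLinearMap.norm_sub_smul_one_mul_lt_one hA hα ?_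
  rw [← map_one (toEuclideanCLM (n := n) (𝕜 := ℂ)), ← map_smul, ← map_sub, ← map_mul,
    mul_nonsing_inv _ ((isUnit_iff_isUnit_det _).mp hN), map_one]

end Matrix

theorem opNorm_eq_norm (A : Matrix (Fin 2) (Fin 2) ℂ) : opNorm A = ‖A‖ := rfl

theorem one_sub_mul_add_ne_zero_of_mem_pentablock {a s p : ℂ} (h : (a, s, p) ∈ pentablock)
    {c : ℂ} (hc : ‖c‖ ≤ 1) : 1 - c * s + c ^ 2 * p ≠ 0 := by
  obtain ⟨A, hA, hx⟩ := h
  simp only [Prod.mk.injEq] at hx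
  obtain ⟨-, rfl, rfl⟩ := hx
  rw [← Matrix.det_fin_two_one_sub_smul]
  exact ((Matrix.isUnit_one_sub_smul hA hc).map Matrix.detMonoidHom).ne_zero

theorem mul_fst_mem_pentablock {a s p : ℂ} (h : (a, s, p) ∈ pentablock) {ω : ℂ} (hω : ‖ω‖ = 1) :
    (ω * a, s, p) ∈ pentablock := by
  obtain ⟨A, hA, hx⟩ := h
  simp only [Prod.mk.injEq] at hx
  obtain ⟨rfl, rfl, rfl⟩ := hx
  set U : Matrix (Fin 2) (Fin 2) ℂ := Matrix.diagonal ![1, ω]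
  have hU : U ∈ Matrix.unitaryGroup (Fin 2) ℂ := by
    rw [Matrix.mem_unitaryGroup_iff', Matrix.star_eq_conjTranspose, Matrix.diagonal_conjTranspose,
      Matrix.diagonal_mul_diagonal, ← Matrix.diagonal_one]
    congr 1
    ext i
    fin_cases i <;> simp [← Complex.normSq_eq_conj_mul_self, Complex.normSq_eq_norm_sq, hω]
  have hUU : star U * U = 1 := Unitary.star_mul_self_of_mem hU
  refine ⟨U * A * star U, ?_, Prod.ext ?_ (Prod.ext ?_ ?_)⟩
  · rwa [opNorm_eq_norm, CStarRing.norm_mul_mem_unitary _ (Unitary.star_mem hU),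
      CStarRing.norm_mem_unitary_mul _ hU]
  · simp [U, Matrix.star_eq_conjTranspose, Matrix.diagonal_conjTranspose]
  · rw [Matrix.trace_mul_comm, ← mul_assoc, hUU, one_mul]
  · rw [Matrix.det_mul_comm, ← mul_assoc, hUU, one_mul]

theorem smul_mem_pentablock {a s p : ℂ} (h : (a, s, p) ∈ pentablock) {η : ℂ} (hη : ‖η‖ ≤ 1) :
    (η * a, η * s, η ^ 2 * p) ∈ pentablock := by
  obtain ⟨A, hA, hx⟩ := h
  simp only [Prod.mk.injEq] at hx
  obtain ⟨rfl, rfl, rfl⟩ := hx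
  refine ⟨η • A, ?_, by simp [Matrix.trace_smul]⟩
  rw [opNorm_eq_norm, norm_smul]
  exact mul_lt_one_of_nonneg_of_lt_one_right hη (norm_nonneg _) hA

theorem mobius_mem_pentablock {a s p : ℂ} (h : (a, s, p) ∈ pentablock) {α : ℂ} (hα : ‖α‖ < 1) :
    (((1 - ‖α‖ ^ 2 : ℝ) : ℂ) * a / (1 - conj α * s + conj α ^ 2 * p),
      ((1 + α * conj α) * s - 2 * α - 2 * conj α * p) / (1 - conj α * s + conj α ^ 2 * p),
      (p - α * s + α ^ 2) / (1 - conj α * s + conj α ^ 2 * p)) ∈ pentablock := by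
  obtain ⟨A, hA, hx⟩ := h
  simp only [Prod.mk.injEq] at hx
  obtain ⟨rfl, rfl, rfl⟩ := hx
  refine ⟨(A - α • 1) * (1 - conj α • A)⁻¹, Matrix.norm_mobius_lt_one hA hα, ?_⟩
  rw [Matrix.mobius_fin_two_apply_one_zero, Matrix.trace_mobius_fin_two, Matrix.det_mul,
    Matrix.det_nonsing_inv, Ring.inverse_eq_inv', ← div_eq_mul_inv,
    Matrix.det_fin_two_sub_smul_one, Matrix.det_fin_two_one_sub_smul, Complex.mul_conj']
  push_cast
  rfl

theorem stmt_19 (ω η α : ℂ) (hω : ‖ω‖ = 1) (hη : ‖η‖ = 1) (hα : ‖α‖ < 1)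
    (υ : ℂ → ℂ) (hυ : ∀ l, υ l = η * (l - α) / (1 - (starRingEnd ℂ) α * l))
    (a l₁ l₂ : ℂ) (h : (a, l₁ + l₂, l₁ * l₂) ∈ pentablock) :
    (ω * η * ((1 - ‖α‖ ^ 2 : ℝ) : ℂ) * a /
        (1 - (starRingEnd ℂ) α * (l₁ + l₂) + (starRingEnd ℂ) α ^ 2 * (l₁ * l₂)),
      υ l₁ + υ l₂, υ l₁ * υ l₂) ∈ pentablock := by
  have hd := one_sub_mul_add_ne_zero_of_mem_pentablock h (c := conj α)
    (by rw [RCLike.norm_conj]; exact hα.le)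
  have hfactor : 1 - conj α * (l₁ + l₂) + conj α ^ 2 * (l₁ * l₂)
      = (1 - conj α * l₁) * (1 - conj α * l₂) := by ring
  obtain ⟨hd₁, hd₂⟩ := mul_ne_zero_iff.mp (hfactor ▸ hd)
  have hmem := mul_fst_mem_pentablock (smul_mem_pentablock (mobius_mem_pentablock h hα) hη.le) hω
  convert hmem using 3
  · ring
  · rw [hυ, hυ, hfactor, div_add_div _ _ hd₁ hd₂, mul_div_assoc']
    ring
  · rw [hυ, hυ, hfactor, div_mul_div_comm, mul_div_assoc']
    ring
end
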